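/- In the plane ℝ² remove the origin and define the horismos relation E⁺ on X = ℝ² \ {(0,0)} by: (p, q) ∈ E⁺ iff q = p + t(1,1) or q = p + t(1,−1) for some t ≥ 0, and the straight segment from p to q does not pass through the origin. Then for every p ∈ X the sets E⁺(p) and E⁻(p) are closed in X, but E⁺ is not closed in X × X. -/

import Mathlib

/-- The punctured plane `ℝ² \ {0}`. -/
def PuncturedPlane : Type := {p : ℝ × ℝ // p ≠ (0, 0)}

instance : TopologicalSpace PuncturedPlane := instTopologicalSpaceSubtype

/-- The horismos relation of 2-dimensional Minkowski space (in slope-±1 null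
coordinates) restricted to the punctured plane: `(p,q) ∈ E⁺` iff `q` lies on the
future null ray from `p` in direction `(1,1)` or `(1,−1)` and the straight
segment from `p` to `q` avoids the origin. -/
def EPlusPunct : Set (PuncturedPlane × PuncturedPlane) :=
  {z | (∃ t : ℝ, 0 ≤ t ∧
          (z.2.1 = z.1.1 + t • ((1, 1) : ℝ × ℝ) ∨
           z.2.1 = z.1.1 + t • ((1, -1) : ℝ × ℝ))) ∧
        ∀ s ∈ Set.Icc (0:ℝ) 1, (1 - s) • z.1.1 + s • z.2.1 ≠ (0, 0)}

lemma seg_eq (a v : ℝ × ℝ) (s t : ℝ) :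
    (1 - s) • a + s • (a + t • v) = a + (s * t) • v := by module

lemma flip_ray (a b v : ℝ × ℝ) (t : ℝ) : a = b + t • v ↔ b = a + t • (-v) := by
  constructor <;> intro h <;> rw [h] <;> module

lemma seg_flip (a b : ℝ × ℝ) (h : ∀ s ∈ Set.Icc (0:ℝ) 1, (1 - s) • a + s • b ≠ (0, 0)) :
    ∀ s ∈ Set.Icc (0:ℝ) 1, (1 - s) • b + s • a ≠ (0, 0) := by
  intro s hs heq
  apply h (1 - s) ⟨by linarith [hs.2], by linarith [hs.1]⟩
  rw [← heq]; module

/-- Key lemma: for a fixed `p` in the punctured plane and a null direction `v`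
(with `v.1² = 1`), the set of `q` lying on the ray from `p` in direction `v`
with the segment `[p, q]` avoiding the origin is closed in the punctured plane.
Indeed, if the ray from `p` hits the origin at parameter `t₀ > 0`, this set is
the trace on the punctured plane of the compact segment `{p + t v : t ∈ [0, t₀]}`
of the full plane; otherwise it is the trace of the full closed ray. -/
lemma ray_slice_closed (p : PuncturedPlane) (v : ℝ × ℝ) (hv : v.1 * v.1 = 1) :
    IsClosed {q : PuncturedPlane | ∃ t : ℝ, 0 ≤ t ∧ q.1 = p.1 + t • v ∧
      ∀ s ∈ Set.Icc (0:ℝ) 1, (1 - s) • p.1 + s • q.1 ≠ (0, 0)} := by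
  have hv1 : v.1 ≠ 0 := by
    intro h; rw [h] at hv; norm_num at hv
  set r : ℝ × ℝ → ℝ := fun x => (x.1 - p.1.1) * v.1 with hr
  have hrc : Continuous r := by fun_prop
  have hrt : ∀ t : ℝ, r (p.1 + t • v) = t := by
    intro t
    have h1 : ((p.1 + t • v).1 - p.1.1) * v.1 = t * (v.1 * v.1) := by
      simp [Prod.fst_add]; ring
    simp only [hr, h1, hv, mul_one]
  by_cases h : ∃ t₀ : ℝ, 0 < t₀ ∧ p.1 + t₀ • v = (0, 0)
  · obtain ⟨t₀, ht₀, h0⟩ := h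
    have key : {q : PuncturedPlane | ∃ t : ℝ, 0 ≤ t ∧ q.1 = p.1 + t • v ∧
        ∀ s ∈ Set.Icc (0:ℝ) 1, (1 - s) • p.1 + s • q.1 ≠ (0, 0)} =
        Subtype.val ⁻¹' ({x : ℝ × ℝ | x = p.1 + (r x) • v} ∩ {x | 0 ≤ r x} ∩ {x | r x ≤ t₀}) := by
      ext q
      simp only [Set.mem_setOf_eq, Set.mem_preimage, Set.mem_inter_iff]
      constructor
      · rintro ⟨t, ht, hq, hseg⟩
        have hrq : r q.1 = t := by rw [hq, hrt]
        refine ⟨⟨by show q.1 = p.1 + r q.1 • v; rw [hrq, ← hq], by show 0 ≤ r q.1; rw [hrq]; exact ht⟩, ?_⟩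
        show r q.1 ≤ t₀; rw [hrq]
        by_contra hlt
        push_neg at hlt
        have htpos : 0 < t := lt_trans ht₀ hlt
        have hs : t₀ / t ∈ Set.Icc (0:ℝ) 1 := by
          constructor
          · positivity
          · rw [div_le_one htpos]; linarith
        apply hseg (t₀ / t) hs
        rw [hq, seg_eq]
        rw [div_mul_cancel₀ _ (ne_of_gt htpos)]
        exact h0
      · rintro ⟨⟨hx, hge⟩, hle⟩
        refine ⟨r q.1, hge, hx, ?_⟩
        intro s hs heq
        rw [hx, seg_eq] at heq
        have e1 : p.1.1 + (s * r q.1) * v.1 = 0 := by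
          have := congrArg Prod.fst heq
          simpa using this
        have e2 : p.1.1 + t₀ * v.1 = 0 := by
          have := congrArg Prod.fst h0
          simpa using this
        have hst : s * r q.1 = t₀ := by
          have : (s * r q.1) * v.1 = t₀ * v.1 := by linarith
          exact mul_right_cancel₀ hv1 this
        have hteq : r q.1 = t₀ := by nlinarith [hs.1, hs.2, show r q.1 ≤ t₀ from hle, show 0 ≤ r q.1 from hge]
        have : q.1 = (0, 0) := by
          rw [hx, hteq]; exact h0
        exact q.2 this
    rw [key]
    refine IsClosed.preimage continuous_subtype_val ?_
    refine (IsClosed.inter (IsClosed.inter ?_ ?_) ?_)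
    · exact isClosed_eq continuous_id (by fun_prop)
    · exact isClosed_le continuous_const hrc
    · exact isClosed_le hrc continuous_const
  · have key : {q : PuncturedPlane | ∃ t : ℝ, 0 ≤ t ∧ q.1 = p.1 + t • v ∧
        ∀ s ∈ Set.Icc (0:ℝ) 1, (1 - s) • p.1 + s • q.1 ≠ (0, 0)} =
        Subtype.val ⁻¹' ({x : ℝ × ℝ | x = p.1 + (r x) • v} ∩ {x | 0 ≤ r x}) := by
      ext q
      simp only [Set.mem_setOf_eq, Set.mem_preimage, Set.mem_inter_iff]
      constructor
      · rintro ⟨t, ht, hq, hseg⟩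
        have hrq : r q.1 = t := by rw [hq, hrt]
        exact ⟨by show q.1 = p.1 + r q.1 • v; rw [hrq, ← hq], by show 0 ≤ r q.1; rw [hrq]; exact ht⟩
      · rintro ⟨hx, hge⟩
        refine ⟨r q.1, hge, hx, ?_⟩
        intro s hs heq
        rw [hx, seg_eq] at heq
        rcases eq_or_lt_of_le (mul_nonneg hs.1 hge) with h0 | h0
        · rw [← h0] at heq
          simp at heq
          exact p.2 heq
        · exact h ⟨s * r q.1, h0, heq⟩
    rw [key]
    refine IsClosed.preimage continuous_subtype_val ?_
    refine IsClosed.inter ?_ ?_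
    · exact isClosed_eq continuous_id (by fun_prop)
    · exact isClosed_le continuous_const hrc

/-- every slice `E⁺(p)` and `E⁻(p)` of the horismos relation on the
punctured plane is closed, but `E⁺` itself is not closed in `X × X`. -/
theorem EPlusPunct_slices_closed_not_closed :
    (∀ p : PuncturedPlane, IsClosed {q : PuncturedPlane | (p, q) ∈ EPlusPunct}) ∧
    (∀ p : PuncturedPlane, IsClosed {q : PuncturedPlane | (q, p) ∈ EPlusPunct}) ∧
    ¬ IsClosed EPlusPunct := by
  refine ⟨?_, ?_, ?_⟩
  · -- future slices are closed
    intro p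
    have key : {q : PuncturedPlane | (p, q) ∈ EPlusPunct} =
        {q : PuncturedPlane | ∃ t : ℝ, 0 ≤ t ∧ q.1 = p.1 + t • ((1, 1) : ℝ × ℝ) ∧
          ∀ s ∈ Set.Icc (0:ℝ) 1, (1 - s) • p.1 + s • q.1 ≠ (0, 0)} ∪
        {q : PuncturedPlane | ∃ t : ℝ, 0 ≤ t ∧ q.1 = p.1 + t • ((1, -1) : ℝ × ℝ) ∧
          ∀ s ∈ Set.Icc (0:ℝ) 1, (1 - s) • p.1 + s • q.1 ≠ (0, 0)} := by
      ext q
      simp only [EPlusPunct, Set.mem_setOf_eq, Set.mem_union]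
      constructor
      · rintro ⟨⟨t, ht, hq | hq⟩, hseg⟩
        · exact Or.inl ⟨t, ht, hq, hseg⟩
        · exact Or.inr ⟨t, ht, hq, hseg⟩
      · rintro (⟨t, ht, hq, hseg⟩ | ⟨t, ht, hq, hseg⟩)
        · exact ⟨⟨t, ht, Or.inl hq⟩, hseg⟩
        · exact ⟨⟨t, ht, Or.inr hq⟩, hseg⟩
    rw [key]
    exact (ray_slice_closed p (1, 1) (by norm_num)).union
      (ray_slice_closed p (1, -1) (by norm_num))
  · -- past slices are closed
    intro p
    have key : {q : PuncturedPlane | (q, p) ∈ EPlusPunct} =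
        {q : PuncturedPlane | ∃ t : ℝ, 0 ≤ t ∧ q.1 = p.1 + t • (-((1, 1) : ℝ × ℝ)) ∧
          ∀ s ∈ Set.Icc (0:ℝ) 1, (1 - s) • p.1 + s • q.1 ≠ (0, 0)} ∪
        {q : PuncturedPlane | ∃ t : ℝ, 0 ≤ t ∧ q.1 = p.1 + t • (-((1, -1) : ℝ × ℝ)) ∧
          ∀ s ∈ Set.Icc (0:ℝ) 1, (1 - s) • p.1 + s • q.1 ≠ (0, 0)} := by
      ext q
      simp only [EPlusPunct, Set.mem_setOf_eq, Set.mem_union]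
      constructor
      · rintro ⟨⟨t, ht, hq | hq⟩, hseg⟩
        · exact Or.inl ⟨t, ht, (flip_ray _ _ _ _).1 hq, seg_flip _ _ hseg⟩
        · exact Or.inr ⟨t, ht, (flip_ray _ _ _ _).1 hq, seg_flip _ _ hseg⟩
      · rintro (⟨t, ht, hq, hseg⟩ | ⟨t, ht, hq, hseg⟩)
        · exact ⟨⟨t, ht, Or.inl ((flip_ray _ _ _ _).2 hq)⟩, seg_flip _ _ hseg⟩
        · exact ⟨⟨t, ht, Or.inr ((flip_ray _ _ _ _).2 hq)⟩, seg_flip _ _ hseg⟩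
    rw [key]
    exact (ray_slice_closed p (-((1, 1) : ℝ × ℝ)) (by norm_num)).union
      (ray_slice_closed p (-((1, -1) : ℝ × ℝ)) (by norm_num))
  · -- E⁺ is not closed
    intro hcl
    set p : PuncturedPlane := ⟨(-1, -1), by norm_num [Prod.ext_iff]⟩ with hp
    set q : PuncturedPlane := ⟨(1, 1), by norm_num [Prod.ext_iff]⟩ with hq
    set a : ℕ → PuncturedPlane :=
      fun n => ⟨(-1, -1 + 1/((n:ℝ)+1)), by norm_num [Prod.ext_iff]⟩ with ha
    set b : ℕ → PuncturedPlane :=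
      fun n => ⟨(1, 1 + 1/((n:ℝ)+1)), by norm_num [Prod.ext_iff]⟩ with hb
    have hfmem : ∀ n : ℕ, (a n, b n) ∈ EPlusPunct := by
      intro n
      refine ⟨⟨2, by norm_num, Or.inl ?_⟩, ?_⟩
      · show ((1, 1 + 1/((n:ℝ)+1)) : ℝ × ℝ) = (-1, -1 + 1/((n:ℝ)+1)) + (2:ℝ) • ((1,1) : ℝ × ℝ)
        norm_num [Prod.ext_iff]; ring
      · intro s hs heq
        have e : (0:ℝ) < 1/((n:ℝ)+1) := by positivity
        have heq' : (1 - s) • ((-1, -1 + 1/((n:ℝ)+1)) : ℝ × ℝ) +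
            s • ((1, 1 + 1/((n:ℝ)+1)) : ℝ × ℝ) = (0, 0) := heq
        rw [Prod.ext_iff] at heq'
        simp only [Prod.fst_add, Prod.snd_add, Prod.smul_fst, Prod.smul_snd,
          smul_eq_mul] at heq'
        obtain ⟨h1, h2⟩ := heq'
        nlinarith [h1, h2, e]
    have hone : Filter.Tendsto (fun n : ℕ => 1/((n:ℝ)+1)) Filter.atTop (nhds 0) :=
      tendsto_one_div_add_atTop_nhds_zero_nat
    have hta : Filter.Tendsto a Filter.atTop (nhds p) := by
      refine (tendsto_subtype_rng (p := fun x : ℝ × ℝ => x ≠ (0, 0))).2 ?_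
      refine Filter.Tendsto.prodMk_nhds tendsto_const_nhds ?_
      have := tendsto_const_nhds (x := (-1:ℝ)) (f := Filter.atTop (α := ℕ)) |>.add hone
      simpa using this
    have htb : Filter.Tendsto b Filter.atTop (nhds q) := by
      refine (tendsto_subtype_rng (p := fun x : ℝ × ℝ => x ≠ (0, 0))).2 ?_
      refine Filter.Tendsto.prodMk_nhds tendsto_const_nhds ?_
      have := tendsto_const_nhds (x := (1:ℝ)) (f := Filter.atTop (α := ℕ)) |>.add hone
      simpa using this
    have htend : Filter.Tendsto (fun n => (a n, b n)) Filter.atTop (nhds (p, q)) :=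
      Filter.Tendsto.prodMk_nhds hta htb
    have hmem : (p, q) ∈ EPlusPunct :=
      hcl.mem_of_tendsto htend (Filter.Eventually.of_forall hfmem)
    obtain ⟨-, hseg⟩ := hmem
    apply hseg (1/2) ⟨by norm_num, by norm_num⟩
    show (1 - (1/2 : ℝ)) • ((-1, -1) : ℝ × ℝ) + (1/2 : ℝ) • ((1, 1) : ℝ × ℝ) = (0, 0)
    norm_num [Prod.ext_iff]
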